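/- arXiv:2403.10810 — 2 statements merged into one kernel-verified Lean document; each statement's English description precedes it below -/
import Mathlib

section
/- For any nonnegative C^1 function F : ℝ^6 → [0,∞) with F(v,w) = F(w,v) and sufficient integrability, the marginal πF(v) := ∫_{ℝ^3} F(v,w) dw satisfies i(πF) ≤ (1/2) I(F), where i is the Fisher information on ℝ^3 and I is the Fisher information on ℝ^6. -/
open MeasureTheory

noncomputable section

/-- Partial derivative in the `i`-th coordinate direction. -/
def pd {n : ℕ} (f : (Fin n → ℝ) → ℝ) (x : Fin n → ℝ) (i : Fin n) : ℝ :=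
  fderiv ℝ f x (Pi.single i 1)

/-- Squared Euclidean norm of the gradient. -/
def gradSq {n : ℕ} (f : (Fin n → ℝ) → ℝ) (x : Fin n → ℝ) : ℝ :=
  ∑ i, (pd f x i) ^ 2

/-- Fisher information on ℝⁿ. -/
def fisher {n : ℕ} (f : (Fin n → ℝ) → ℝ) : ℝ :=
  ∫ x, gradSq f x / f x

/-!
Differentiating under the integral sign, `∂ᵢ(πF)(v) = ∫ ∂_{vᵢ}F(v,w) dw`. Since `F ≥ 0`, its
gradient vanishes wherever `F` does, so Cauchy–Schwarz with weight `F(v,·)` gives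
`(∂ᵢ(πF)(v))² ≤ πF(v) ∫ (∂_{vᵢ}F)² / F dw`. Summing over `i` and integrating in `v` bounds
`i(πF)` by the Fisher information of `F` in the variable `v` alone, and by the symmetry of `F`
this is half of `I(F)`.
-/

theorem sq_integral_le_integral_mul_integral_sq_div {α : Type*} [MeasurableSpace α]
    {μ : Measure α} {f h : α → ℝ} (hf : ∀ x, 0 ≤ f x) (hfh : ∀ x, f x = 0 → h x = 0)
    (hf_int : Integrable f μ) (hhf_int : Integrable (fun x => h x ^ 2 / f x) μ) :
    (∫ x, h x ∂μ) ^ 2 ≤ (∫ x, f x ∂μ) * ∫ x, h x ^ 2 / f x ∂μ := by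
  have hq : ∀ x, 0 ≤ h x ^ 2 / f x := fun x => div_nonneg (sq_nonneg _) (hf x)
  have memLp_sqrt {u : α → ℝ} (hu : ∀ x, 0 ≤ u x) (hu_int : Integrable u μ) :
      MemLp (fun x => √(u x)) (ENNReal.ofReal 2) μ := by
    rw [ENNReal.ofReal_ofNat, memLp_two_iff_integrable_sq
      (Real.continuous_sqrt.comp_aestronglyMeasurable hu_int.aestronglyMeasurable)]
    exact hu_int.congr (.of_forall fun x => (Real.sq_sqrt (hu x)).symm)
  -- `|h| = √f · √(h²/f)`, so this is Cauchy–Schwarz for `√f` and `√(h²/f)`.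
  have habs : ∀ x, |h x| = √(f x) * √(h x ^ 2 / f x) := by
    intro x
    by_cases hx : f x = 0
    · simp [hx, hfh x hx]
    · rw [← Real.sqrt_mul (hf x), mul_div_cancel₀ _ hx, Real.sqrt_sq_eq_abs]
  have holder := integral_mul_le_Lp_mul_Lq_of_nonneg Real.HolderConjugate.two_two
    (.of_forall fun x => Real.sqrt_nonneg _) (.of_forall fun x => Real.sqrt_nonneg _)
    (memLp_sqrt hf hf_int) (memLp_sqrt hq hhf_int)
  simp only [Real.rpow_two, Real.sq_sqrt (hf _), Real.sq_sqrt (hq _), ← habs] at holder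
  calc (∫ x, h x ∂μ) ^ 2 = |∫ x, h x ∂μ| ^ 2 := (sq_abs _).symm
    _ ≤ (∫ x, |h x| ∂μ) ^ 2 := by
      gcongr
      exact abs_integral_le_integral_abs
    _ ≤ ((∫ x, f x ∂μ) ^ (1 / 2 : ℝ) * (∫ x, h x ^ 2 / f x ∂μ) ^ (1 / 2 : ℝ)) ^ 2 := by gcongr
    _ = (∫ x, f x ∂μ) * ∫ x, h x ^ 2 / f x ∂μ := by
      rw [mul_pow, ← Real.rpow_natCast, ← Real.rpow_natCast,
        ← Real.rpow_mul (integral_nonneg hf), ← Real.rpow_mul (integral_nonneg hq)]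
      norm_num

theorem ContinuousLinearMap.norm_le_card_mul_of_abs_apply_single_le {ι : Type*} [Fintype ι]
    [DecidableEq ι] (L : (ι → ℝ) →L[ℝ] ℝ) {C : ℝ} (hC : ∀ i, |L (Pi.single i 1)| ≤ C) :
    ‖L‖ ≤ Fintype.card ι * C := by
  have hcardC : 0 ≤ Fintype.card ι * C := by
    rcases isEmpty_or_nonempty ι with _ | ⟨⟨i⟩⟩
    · simp
    · exact mul_nonneg (Nat.cast_nonneg _) ((abs_nonneg _).trans (hC i))
  refine L.opNorm_le_bound hcardC fun u => ?_
  calc ‖L u‖ = ‖∑ i, u i * L (Pi.single i 1)‖ := by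
        conv_lhs => rw [pi_eq_sum_univ' u]
        simp only [map_sum, map_smul, smul_eq_mul]
    _ ≤ ∑ i, ‖u i‖ * |L (Pi.single i 1)| := by
        refine (norm_sum_le _ _).trans_eq ?_
        simp only [norm_mul, Real.norm_eq_abs]
    _ ≤ ∑ _i : ι, ‖u‖ * C := by
        gcongr with i
        exacts [norm_le_pi_norm u i, hC i]
    _ = Fintype.card ι * C * ‖u‖ := by
        rw [Finset.sum_const, Finset.card_univ, nsmul_eq_mul]
        ring

theorem gradSq_nonneg {n : ℕ} (f : (Fin n → ℝ) → ℝ) (x : Fin n → ℝ) : 0 ≤ gradSq f x :=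
  Finset.sum_nonneg fun _ _ => sq_nonneg _

theorem sq_pd_le_gradSq {n : ℕ} (f : (Fin n → ℝ) → ℝ) (x : Fin n → ℝ) (i : Fin n) :
    pd f x i ^ 2 ≤ gradSq f x :=
  Finset.single_le_sum (f := fun j => pd f x j ^ 2) (fun _ _ => sq_nonneg _)
    (Finset.mem_univ i)

theorem pd_eq_zero_of_nonneg_of_eq_zero {n : ℕ} {f : (Fin n → ℝ) → ℝ} (hf : ∀ x, 0 ≤ f x)
    {x : Fin n → ℝ} (hx : f x = 0) (i : Fin n) : pd f x i = 0 := by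
  have hmin : IsLocalMin f x := .of_forall fun y => hx ▸ hf y
  simp [pd, hmin.fderiv_eq_zero]

section PartialDerivative

variable {n : ℕ} {E : Type*} [NormedAddCommGroup E] [NormedSpace ℝ E]
  {F : (Fin n → ℝ) → E → ℝ}

theorem hasFDerivAt_fst_of_differentiable (hF : Differentiable ℝ (Function.uncurry F))
    (v : Fin n → ℝ) (w : E) :
    HasFDerivAt (F · w) ((fderiv ℝ (Function.uncurry F) (v, w)).comp
      (ContinuousLinearMap.inl ℝ (Fin n → ℝ) E)) v := by
  exact (hF (v, w)).hasFDerivAt.comp v (hasFDerivAt_prodMk_left (𝕜 := ℝ) v w)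

theorem continuous_fderiv_fst (hF : ContDiff ℝ 1 (Function.uncurry F)) :
    Continuous fun p : (Fin n → ℝ) × E => fderiv ℝ (F · p.2) p.1 := by
  have hdiff := hF.differentiable one_ne_zero
  simp only [fun p : (Fin n → ℝ) × E => (hasFDerivAt_fst_of_differentiable hdiff p.1 p.2).fderiv]
  exact (hF.continuous_fderiv one_ne_zero).clm_comp continuous_const

theorem continuous_pd_fst (hF : ContDiff ℝ 1 (Function.uncurry F)) (i : Fin n) :
    Continuous fun p : (Fin n → ℝ) × E => pd (F · p.2) p.1 i :=
  (continuous_fderiv_fst hF).clm_apply continuous_const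

theorem continuous_gradSq_fst (hF : ContDiff ℝ 1 (Function.uncurry F)) :
    Continuous fun p : (Fin n → ℝ) × E => gradSq (F · p.2) p.1 :=
  continuous_finsetSum _ fun i _ => (continuous_pd_fst hF i).pow 2

end PartialDerivative

theorem norm_fderiv_fst_le {n : ℕ} {α : Type*} {F : (Fin n → ℝ) → α → ℝ} {g : α → ℝ}
    (hFg : ∀ v w i, |pd (F · w) v i| ≤ g w) (v : Fin n → ℝ) (w : α) :
    ‖fderiv ℝ (F · w) v‖ ≤ n * g w := by
  simpa using (fderiv ℝ (F · w) v).norm_le_card_mul_of_abs_apply_single_le (hFg v w)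

section Marginal

variable {n : ℕ} {E : Type*} [NormedAddCommGroup E] [NormedSpace ℝ E] [MeasurableSpace E]
  [BorelSpace E] {μ : Measure E} {F : (Fin n → ℝ) → E → ℝ} {g : E → ℝ}

theorem integrable_fderiv_fst (hF : ContDiff ℝ 1 (Function.uncurry F)) (hg : Integrable g μ)
    (hFg : ∀ v w i, |pd (F · w) v i| ≤ g w) (v : Fin n → ℝ) :
    Integrable (fun w => fderiv ℝ (F · w) v) μ :=
  (hg.const_mul n).mono'
    ((continuous_fderiv_fst hF).comp (Continuous.prodMk_right v)).aestronglyMeasurable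
    (.of_forall (norm_fderiv_fst_le hFg v))

theorem hasFDerivAt_integral_of_abs_pd_le (hF : ContDiff ℝ 1 (Function.uncurry F))
    (hg : Integrable g μ) (hFg : ∀ v w i, |pd (F · w) v i| ≤ g w) {v : Fin n → ℝ}
    (hFv : Integrable (F v) μ) :
    HasFDerivAt (fun x => ∫ w, F x w ∂μ) (∫ w, fderiv ℝ (F · w) v ∂μ) v :=
  hasFDerivAt_integral_of_dominated_of_fderiv_le Filter.univ_mem
    (.of_forall fun x => (hF.continuous.comp (Continuous.prodMk_right x)).aestronglyMeasurable)
    hFv (integrable_fderiv_fst hF hg hFg v).aestronglyMeasurable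
    (.of_forall fun w x _ => norm_fderiv_fst_le hFg x w) (hg.const_mul n)
    (.of_forall fun w x _ => (hasFDerivAt_fst_of_differentiable
      (hF.differentiable one_ne_zero) x w).differentiableAt.hasFDerivAt)

theorem pd_integral_eq_integral_pd (hF : ContDiff ℝ 1 (Function.uncurry F))
    (hg : Integrable g μ) (hFg : ∀ v w i, |pd (F · w) v i| ≤ g w) {v : Fin n → ℝ}
    (hFv : Integrable (F v) μ) (i : Fin n) :
    pd (fun x => ∫ w, F x w ∂μ) v i = ∫ w, pd (F · w) v i ∂μ := by
  rw [pd, (hasFDerivAt_integral_of_abs_pd_le hF hg hFg hFv).fderiv]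
  exact ContinuousLinearMap.integral_apply (integrable_fderiv_fst hF hg hFg v) _

theorem gradSq_integral_div_le_integral (hF0 : ∀ v w, 0 ≤ F v w)
    (hF : ContDiff ℝ 1 (Function.uncurry F)) (hg : Integrable g μ)
    (hFg : ∀ v w i, |pd (F · w) v i| ≤ g w) {v : Fin n → ℝ} (hFv : Integrable (F v) μ)
    (hI : Integrable (fun w => gradSq (F · w) v / F v w) μ) :
    gradSq (fun x => ∫ w, F x w ∂μ) v / ∫ w, F v w ∂μ ≤ ∫ w, gradSq (F · w) v / F v w ∂μ := by
  have hI_nonneg : 0 ≤ ∫ w, gradSq (F · w) v / F v w ∂μ :=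
    integral_nonneg fun w => div_nonneg (gradSq_nonneg _ _) (hF0 v w)
  rcases (integral_nonneg (μ := μ) (f := F v) fun w => hF0 v w).eq_or_lt with hm | hm
  · rwa [← hm, div_zero]
  have hIi : ∀ i, Integrable (fun w => pd (F · w) v i ^ 2 / F v w) μ := fun i =>
    hI.mono' ((((continuous_pd_fst hF i).comp (Continuous.prodMk_right v)).pow 2).measurable.div
        (hF.continuous.comp (Continuous.prodMk_right v)).measurable).aestronglyMeasurable
      (.of_forall fun w => by
        rw [Real.norm_of_nonneg (div_nonneg (sq_nonneg _) (hF0 v w))]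
        exact div_le_div_of_nonneg_right (sq_pd_le_gradSq _ _ i) (hF0 v w))
  rw [div_le_iff₀' hm]
  calc gradSq (fun x => ∫ w, F x w ∂μ) v = ∑ i, (∫ w, pd (F · w) v i ∂μ) ^ 2 := by
        simp only [gradSq, pd_integral_eq_integral_pd hF hg hFg hFv]
    _ ≤ ∑ i, (∫ w, F v w ∂μ) * ∫ w, pd (F · w) v i ^ 2 / F v w ∂μ := by
        gcongr with i
        exact sq_integral_le_integral_mul_integral_sq_div (hF0 v)
          (fun w hw => pd_eq_zero_of_nonneg_of_eq_zero (hF0 · w) hw i) hFv (hIi i)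
    _ = (∫ w, F v w ∂μ) * ∫ w, gradSq (F · w) v / F v w ∂μ := by
        simp only [← Finset.mul_sum, ← integral_finsetSum _ fun i _ => hIi i, gradSq,
          Finset.sum_div]

theorem fisher_integral_le_integral_gradSq_fst_div [SFinite μ] (hF0 : ∀ v w, 0 ≤ F v w)
    (hF : ContDiff ℝ 1 (Function.uncurry F)) (hg : Integrable g μ)
    (hFg : ∀ v w i, |pd (F · w) v i| ≤ g w)
    (hF_int : Integrable (Function.uncurry F) (volume.prod μ))
    (hI : Integrable (fun p : (Fin n → ℝ) × E => gradSq (F · p.2) p.1 / F p.1 p.2)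
      (volume.prod μ)) :
    fisher (fun v => ∫ w, F v w ∂μ) ≤
      ∫ p, gradSq (F · p.2) p.1 / F p.1 p.2 ∂(volume.prod μ) := by
  rw [integral_prod _ hI]
  refine integral_mono_of_nonneg
    (.of_forall fun v => div_nonneg (gradSq_nonneg _ _) (integral_nonneg fun w => hF0 v w))
    hI.integral_prod_left ?_
  filter_upwards [hF_int.prod_right_ae, hI.prod_right_ae] with v hFv hIv
  exact gradSq_integral_div_le_integral hF0 hF hg hFg hFv hIv

end Marginal

/-- For a nonnegative symmetric `C¹` function `F` on ℝ⁶ with sufficient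
integrability, the marginal `πF(v) = ∫ F(v,w) dw` satisfies
`i(πF) ≤ (1/2) I(F)`. -/
theorem fisher_marginal_le (F : (Fin 3 → ℝ) → (Fin 3 → ℝ) → ℝ)
    (hF0 : ∀ v w, 0 ≤ F v w)
    (hF1 : ContDiff ℝ 1 (fun p : (Fin 3 → ℝ) × (Fin 3 → ℝ) => F p.1 p.2))
    (hsymm : ∀ v w, F v w = F w v)
    (hInt : Integrable (fun p : (Fin 3 → ℝ) × (Fin 3 → ℝ) => F p.1 p.2))
    (hIfin : Integrable (fun p : (Fin 3 → ℝ) × (Fin 3 → ℝ) =>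
      (gradSq (fun v' => F v' p.2) p.1 + gradSq (fun w' => F p.1 w') p.2) / F p.1 p.2))
    (hdom : ∃ g : (Fin 3 → ℝ) → ℝ, Integrable g ∧
      ∀ v w i, |pd (fun v' => F v' w) v i| ≤ g w) :
    fisher (fun v => ∫ w, F v w) ≤
      (1 / 2) * ∫ p : (Fin 3 → ℝ) × (Fin 3 → ℝ),
        (gradSq (fun v' => F v' p.2) p.1 + gradSq (fun w' => F p.1 w') p.2) / F p.1 p.2 := by
  obtain ⟨g, hg, hFg⟩ := hdom
  set Φ : (Fin 3 → ℝ) × (Fin 3 → ℝ) → ℝ := fun p => gradSq (fun v' => F v' p.2) p.1 / F p.1 p.2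
  have hΦ_nonneg : ∀ p, 0 ≤ Φ p := fun p => div_nonneg (gradSq_nonneg _ _) (hF0 _ _)
  have h_split : ∀ p : (Fin 3 → ℝ) × (Fin 3 → ℝ),
      (gradSq (fun v' => F v' p.2) p.1 + gradSq (fun w' => F p.1 w') p.2) / F p.1 p.2
        = Φ p + Φ p.swap := fun p => by
    have hF_swap : (fun v' => F v' p.1) = (fun w' => F p.1 w') := funext fun x => hsymm x p.1
    simp only [Φ, Prod.fst_swap, Prod.snd_swap, hF_swap, hsymm p.2 p.1, add_div]
  have hΦ_int : Integrable Φ := hIfin.mono'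
    ((continuous_gradSq_fst hF1).measurable.div hF1.continuous.measurable).aestronglyMeasurable
    (.of_forall fun p => by
      rw [Real.norm_of_nonneg (hΦ_nonneg p), h_split]
      exact le_add_of_nonneg_right (hΦ_nonneg _))
  calc fisher (fun v => ∫ w, F v w) ≤ ∫ p, Φ p :=
        fisher_integral_le_integral_gradSq_fst_div hF0 hF1 hg hFg hInt hΦ_int
    _ = 1 / 2 * ((∫ p, Φ p) + ∫ p, Φ (Prod.swap p)) := by
        rw [Measure.volume_eq_prod, integral_prod_swap]
        ring
    _ = _ := by
        have hΦ_swap_int : Integrable fun p : (Fin 3 → ℝ) × (Fin 3 → ℝ) => Φ p.swap :=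
          hΦ_int.swap
        rw [integral_congr_ae (.of_forall h_split), integral_add hΦ_int hΦ_swap_int]
end
end

section
/- Let d ≥ 1, 1 ≤ p ≤ ∞ with Hölder conjugate p′, let −d/p′ < μ < 0 and m > d/p′ + μ. Then there is a constant C = C(d, μ, p, m) such that for every f ∈ L^p_m(ℝ^d), the convolution satisfies ‖f ∗ |·|^μ‖_{L^∞(ℝ^d)} ≤ C ‖f‖_{L^p_m(ℝ^d)}. -/
/-!
Write `⟨w⟩ = (1 + ‖w‖²)^(1/2)` and `F = ⟨·⟩^m f`. Splitting `f(w) |v - w|^μ = F(w) · ⟨w⟩^(-m) |v - w|^μ`,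
Hölder's inequality bounds the convolution by `‖F‖_p` times the `L^{p'}` norm of the second factor,
so it suffices that `∫ ⟨w⟩^(-b) |v - w|^(-a) dw` is bounded in `v`, where `a = -μ p'` and `b = m p'`
satisfy `0 < a < d < a + b`. Pointwise, for `|v - w| > 1` the product is at most
`min(⟨w⟩, |v - w|)^(-(a + b)) ≤ ⟨w⟩^(-(a + b)) + |v - w|^(-(a + b))`, while for `|v - w| ≤ 1` it is at most
`|v - w|^(-a)`. Each of these three terms has a finite integral, independent of `v` by translation
invariance: the singularity `|u|^(-a)` is integrable near `0` because `a < d`, and both tails because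
`a + b > d`.
-/

open MeasureTheory ENNReal Metric Module

lemma rpow_neg_mul_rpow_neg_le_add {A B a b : ℝ} (hA : 0 < A) (hB : 0 < B) (ha : 0 ≤ a)
    (hb : 0 ≤ b) : A ^ (-b) * B ^ (-a) ≤ A ^ (-(a + b)) + B ^ (-(a + b)) := by
  rcases le_total A B with hAB | hBA
  · calc A ^ (-b) * B ^ (-a) ≤ A ^ (-b) * A ^ (-a) := mul_le_mul_of_nonneg_left
          (Real.rpow_le_rpow_of_nonpos hA hAB (neg_nonpos.2 ha)) (by positivity)
      _ = A ^ (-(a + b)) := by rw [← Real.rpow_add hA]; ring_nf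
      _ ≤ _ := le_add_of_nonneg_right (by positivity)
  · calc A ^ (-b) * B ^ (-a) ≤ B ^ (-b) * B ^ (-a) := mul_le_mul_of_nonneg_right
          (Real.rpow_le_rpow_of_nonpos hB hBA (neg_nonpos.2 hb)) (by positivity)
      _ = B ^ (-(a + b)) := by rw [← Real.rpow_add hB]; ring_nf
      _ ≤ _ := le_add_of_nonneg_left (by positivity)

section Kernel

variable {E : Type*} [NormedAddCommGroup E]

noncomputable def nearFarRpow (a s : ℝ) (u : E) : ℝ :=
  if ‖u‖ ≤ 1 then ‖u‖ ^ (-a) else ‖u‖ ^ (-s)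

lemma nearFarRpow_nonneg (a s : ℝ) (u : E) : 0 ≤ nearFarRpow a s u := by
  unfold nearFarRpow
  split_ifs <;> positivity

lemma bracket_rpow_mul_norm_rpow_le {a b : ℝ} (ha : 0 ≤ a) (hb : 0 ≤ b) (w x : E) :
    (1 + ‖w‖ ^ 2) ^ (-b / 2) * ‖x‖ ^ (-a) ≤
      (1 + ‖w‖ ^ 2) ^ (-(a + b) / 2) + nearFarRpow a (a + b) x := by
  have hz : 1 ≤ 1 + ‖w‖ ^ 2 := le_add_of_nonneg_right (sq_nonneg _)
  unfold nearFarRpow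
  split_ifs with hx
  · calc (1 + ‖w‖ ^ 2) ^ (-b / 2) * ‖x‖ ^ (-a) ≤ 1 * ‖x‖ ^ (-a) := by
          gcongr
          exact Real.rpow_le_one_of_one_le_of_nonpos hz (by linarith)
      _ ≤ _ := by rw [one_mul]; exact le_add_of_nonneg_left (by positivity)
  · have hsqrt (c : ℝ) : ((1 + ‖w‖ ^ 2) ^ (1 / 2 : ℝ)) ^ (-c) = (1 + ‖w‖ ^ 2) ^ (-c / 2) := by
      rw [← Real.rpow_mul (by positivity)]; ring_nf
    have h := rpow_neg_mul_rpow_neg_le_add (A := (1 + ‖w‖ ^ 2) ^ (1 / 2 : ℝ)) (B := ‖x‖)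
      (by positivity) (by linarith [not_le.1 hx]) ha hb
    rwa [hsqrt, hsqrt] at h

variable [MeasurableSpace E] [BorelSpace E]

lemma measurable_nearFarRpow (a s : ℝ) : Measurable (nearFarRpow (E := E) a s) :=
  Measurable.ite (measurableSet_le (by fun_prop) measurable_const) (by fun_prop) (by fun_prop)

variable [NormedSpace ℝ E] [FiniteDimensional ℝ E] {ν : Measure E} [ν.IsAddHaarMeasure]

lemma integrable_nearFarRpow (hd : 1 ≤ finrank ℝ E) {a s : ℝ} (ha : a < finrank ℝ E)
    (hs : finrank ℝ E < s) : Integrable (nearFarRpow a s) ν := by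
  rw [← integrableOn_univ, ← Set.union_compl_self (closedBall (0 : E) 1), integrableOn_union]
  constructor
  · have hloc : LocallyIntegrable (fun u : E => ‖u‖ ^ (-a)) ν :=
      locallyIntegrable_of_norm_le_rpow (C := 1) hd ha
        (ae_of_all _ fun u => by rw [one_mul, Real.norm_of_nonneg (by positivity)])
        (by fun_prop : Measurable fun u : E => ‖u‖ ^ (-a)).aestronglyMeasurable
    refine (hloc.integrableOn_isCompact (isCompact_closedBall 0 1)).congr_fun (fun u hu => ?_)
      measurableSet_closedBall
    rw [nearFarRpow, if_pos (mem_closedBall_zero_iff.1 hu)]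
  · have hs0 : 0 < s := lt_of_le_of_lt (Nat.cast_nonneg _) hs
    refine Integrable.mono' ((integrable_one_add_norm hs).const_mul (2 ^ s)).integrableOn
      (measurable_nearFarRpow a s).aestronglyMeasurable
      ((ae_restrict_iff' measurableSet_closedBall.compl).2 (ae_of_all _ fun u hu => ?_))
    have hu : 1 < ‖u‖ := by simpa using hu
    rw [Real.norm_of_nonneg (nearFarRpow_nonneg a s u), nearFarRpow, if_neg hu.not_ge]
    calc ‖u‖ ^ (-s) = 2 ^ s * (2 * ‖u‖) ^ (-s) := by
          rw [Real.mul_rpow zero_le_two (by positivity), Real.rpow_neg zero_le_two, ← mul_assoc,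
            mul_inv_cancel₀ (by positivity), one_mul]
      _ ≤ 2 ^ s * (1 + ‖u‖) ^ (-s) := mul_le_mul_of_nonneg_left
          (Real.rpow_le_rpow_of_nonpos (by positivity) (by linarith) (by linarith)) (by positivity)

lemma exists_lintegral_bracket_rpow_mul_norm_sub_rpow_le {a b : ℝ} (ha : 0 ≤ a)
    (had : a < finrank ℝ E) (hb : 0 ≤ b) (hab : finrank ℝ E < a + b) :
    ∃ K ≠ ∞, ∀ v : E,
      ∫⁻ w, ENNReal.ofReal ((1 + ‖w‖ ^ 2) ^ (-b / 2) * ‖v - w‖ ^ (-a)) ∂ν ≤ K := by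
  have hd : 1 ≤ finrank ℝ E := by exact_mod_cast (ha.trans_lt had)
  have hB := integrable_rpow_neg_one_add_norm_sq (μ := ν) hab
  have hP := integrable_nearFarRpow (ν := ν) hd had hab
  refine ⟨_, (add_lt_top.2 ⟨hB.lintegral_lt_top, hP.lintegral_lt_top⟩).ne, fun v => ?_⟩
  calc ∫⁻ w, ENNReal.ofReal ((1 + ‖w‖ ^ 2) ^ (-b / 2) * ‖v - w‖ ^ (-a)) ∂ν
      ≤ ∫⁻ w, ENNReal.ofReal ((1 + ‖w‖ ^ 2) ^ (-(a + b) / 2))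
          + ENNReal.ofReal (nearFarRpow a (a + b) (v - w)) ∂ν :=
        lintegral_mono fun w => (ofReal_le_ofReal
          (bracket_rpow_mul_norm_rpow_le ha hb w (v - w))).trans ofReal_add_le
    _ = _ := by
        rw [lintegral_add_left (by fun_prop),
          lintegral_sub_left_eq_self (fun u => ENNReal.ofReal (nearFarRpow a (a + b) u)) v]

lemma exists_eLpNorm_bracket_rpow_mul_norm_sub_rpow_le {p : ℝ≥0∞} {μ m : ℝ}
    (hμ1 : -(finrank ℝ E / p.toReal) < μ) (hμ2 : μ < 0) (hm : finrank ℝ E / p.toReal + μ < m) :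
    ∃ K ≠ ∞, ∀ v : E, eLpNorm (fun w => (1 + ‖w‖ ^ 2) ^ (-m / 2) * ‖v - w‖ ^ μ) p ν ≤ K := by
  set q := p.toReal
  -- `toReal` sends `0` and `∞` to `0`, which `hμ1` and `hμ2` exclude.
  have hq : 0 < q := by
    by_contra! h
    rw [le_antisymm h toReal_nonneg, _root_.div_zero, neg_zero] at hμ1
    linarith
  obtain ⟨hp0, hptop⟩ := toReal_pos_iff.1 hq
  have had : -(μ * q) < finrank ℝ E := by
    rw [neg_lt, ← div_lt_iff₀ hq, neg_div]; exact hμ1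
  have hab : finrank ℝ E < -(μ * q) + m * q := by
    have := (div_lt_iff₀ hq).1 (show finrank ℝ E / q < m - μ by linarith)
    linarith
  have hm0 : 0 ≤ m := by linarith [show (0 : ℝ) ≤ finrank ℝ E / q by positivity]
  obtain ⟨K, hK, hKv⟩ := exists_lintegral_bracket_rpow_mul_norm_sub_rpow_le (ν := ν)
    (by nlinarith) had (by positivity) hab
  refine ⟨K ^ (1 / q), rpow_ne_top_of_nonneg (by positivity) hK, fun v => ?_⟩
  rw [eLpNorm_eq_lintegral_rpow_enorm_toReal hp0.ne' hptop.ne]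
  gcongr
  refine le_of_eq_of_le (lintegral_congr fun w => ?_) (hKv v)
  rw [Real.enorm_eq_ofReal (by positivity), ofReal_rpow_of_nonneg (by positivity) hq.le,
    Real.mul_rpow (by positivity) (by positivity), ← Real.rpow_mul (by positivity),
    ← Real.rpow_mul (norm_nonneg _)]
  ring_nf

end Kernel

lemma enorm_integral_mul_le_eLpNorm_mul_eLpNorm {α 𝕜 : Type*} [MeasurableSpace α] [RCLike 𝕜]
    {ν : Measure α} {p q : ℝ≥0∞} [HolderTriple p q 1] {F G : α → 𝕜}
    (hF : AEStronglyMeasurable F ν) (hG : AEStronglyMeasurable G ν) :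
    ‖∫ x, F x * G x ∂ν‖ₑ ≤ eLpNorm F p ν * eLpNorm G q ν := by
  refine (enorm_integral_le_lintegral_enorm _).trans ?_
  rw [← eLpNorm_one_eq_lintegral_enorm]
  simpa using eLpNorm_le_eLpNorm_mul_eLpNorm'_of_norm (p := p) (q := q) (r := 1) hF hG (· * ·) 1
    (ae_of_all _ fun x => by simp)

theorem convolution_Linfty_bound_general (d : ℕ)
    (p p' : ℝ≥0∞) (hpc : 1 / p + 1 / p' = 1)
    (μ m : ℝ)
    (hμ1 : -((d : ℝ) / p'.toReal) < μ) (hμ2 : μ < 0)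
    (hm : (d : ℝ) / p'.toReal + μ < m) :
    ∃ C > 0, ∀ f : EuclideanSpace ℝ (Fin d) → ℝ,
      MemLp (fun v => (1 + ‖v‖ ^ 2) ^ (m / 2) * f v) p volume →
      ∀ v, |∫ w, f w * ‖v - w‖ ^ μ| ≤
        C * (eLpNorm (fun v => (1 + ‖v‖ ^ 2) ^ (m / 2) * f v) p volume).toReal := by
  have hdim : (finrank ℝ (EuclideanSpace ℝ (Fin d)) : ℝ) = d := by simp
  rw [← hdim] at hμ1 hm
  obtain ⟨K, hK, hKv⟩ := exists_eLpNorm_bracket_rpow_mul_norm_sub_rpow_le (ν := volume)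
    hμ1 hμ2 hm
  have : HolderTriple p p' 1 := ⟨by simpa only [one_div, inv_one] using hpc⟩
  refine ⟨K.toReal + 1, by positivity, fun f hf v => ?_⟩
  have hfactor : ∀ w, f w * ‖v - w‖ ^ μ =
      (1 + ‖w‖ ^ 2) ^ (m / 2) * f w * ((1 + ‖w‖ ^ 2) ^ (-m / 2) * ‖v - w‖ ^ μ) := fun w => by
    rw [neg_div, Real.rpow_neg (by positivity)]
    field_simp
  have hbound : ‖∫ w, f w * ‖v - w‖ ^ μ‖ₑ ≤
      eLpNorm (fun w => (1 + ‖w‖ ^ 2) ^ (m / 2) * f w) p volume * K := by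
    simp_rw [hfactor]
    refine (enorm_integral_mul_le_eLpNorm_mul_eLpNorm hf.1 ?_).trans (by gcongr; exact hKv v)
    exact (by fun_prop : Measurable fun w : EuclideanSpace ℝ (Fin d) =>
      (1 + ‖w‖ ^ 2) ^ (-m / 2) * ‖v - w‖ ^ μ).aestronglyMeasurable
  calc |∫ w, f w * ‖v - w‖ ^ μ| ≤ (eLpNorm _ p volume * K).toReal := by
        rw [← Real.norm_eq_abs, ← toReal_enorm]
        exact toReal_mono (mul_ne_top hf.2.ne hK) hbound
    _ ≤ _ := by
        rw [toReal_mul, mul_comm]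
        gcongr
        linarith

/-- Weighted convolution estimate: for `1 ≤ p ≤ ∞` with conjugate `p'`,
`-d/p' < μ < 0` and `m > d/p' + μ`, the convolution `f ∗ |·|^μ` is bounded by
`C ‖f‖_{L^p_m}`, where `‖f‖_{L^p_m} = ‖⟨v⟩^m f‖_{L^p}`. -/
theorem convolution_Linfty_bound (d : ℕ) (hd : 1 ≤ d)
    (p p' : ℝ≥0∞) (hp : 1 ≤ p) (hpc : 1 / p + 1 / p' = 1)
    (μ m : ℝ)
    (hμ1 : -((d : ℝ) / p'.toReal) < μ) (hμ2 : μ < 0)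
    (hm : (d : ℝ) / p'.toReal + μ < m) :
    ∃ C > 0, ∀ f : EuclideanSpace ℝ (Fin d) → ℝ,
      MemLp (fun v => (1 + ‖v‖ ^ 2) ^ (m / 2) * f v) p volume →
      ∀ v, |∫ w, f w * ‖v - w‖ ^ μ| ≤
        C * (eLpNorm (fun v => (1 + ‖v‖ ^ 2) ^ (m / 2) * f v) p volume).toReal :=
  convolution_Linfty_bound_general d p p' hpc μ m hμ1 hμ2 hm
end
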